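/- Let v_1,...,v_n ∈ ℝ^{n-1} be the vertices of an (n−1)-simplex Δ and ℓ a linear functional with ∑_{i=1}^n ℓ(v_i) = 0. Then ∫_Δ ℓ(x)^4 dx = (Vol(Δ)/(n(n+1)(n+2)(n+3)))·(6∑_{i=1}^n ℓ(v_i)^4 + 3(∑_{i=1}^n ℓ(v_i)^2)^2). -/

import Mathlib

/-!
Map the corner simplex `{x ∈ ℝ^d | x ≥ 0, ∑ x ≤ 1}` affinely onto `Δ`. The change of variables
turns `∫_Δ ℓ^k` into `vol Δ · d!` times the integral over the corner simplex of the affine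
function with vertex values `wᵢ = ℓ(vᵢ)`. Slicing the corner simplex along its last coordinate,
expanding binomially and evaluating Beta integrals gives, by induction on `d`, the moment formula
`∫ (affine)^k = k! / (d + k)! · h_k(w)`, where `h_k` is the complete homogeneous symmetric
polynomial. Finally `24 h₄ = p₁⁴ + 6 p₁² p₂ + 3 p₂² + 8 p₁ p₃ + 6 p₄` in the power sums `pⱼ`,
and `p₁ = 0`.
-/

open MeasureTheory Finset
open scoped Nat Pointwise

theorem integral_pow_mul_one_sub_pow (i j : ℕ) :
    ∫ t in (0 : ℝ)..1, t ^ i * (1 - t) ^ j = (i ! * j ! : ℝ) / (i + j + 1)! := by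
  induction j generalizing i with
  | zero =>
    simp only [pow_zero, mul_one, integral_pow, one_pow, zero_pow (Nat.succ_ne_zero _), sub_zero,
      Nat.factorial_zero, Nat.cast_one, add_zero, Nat.factorial_succ]
    push_cast
    field_simp
  | succ j ih =>
    have hu : ∀ t ∈ Set.uIcc (0 : ℝ) 1,
        HasDerivAt (fun t : ℝ => (1 - t) ^ (j + 1)) (-((j + 1) * (1 - t) ^ j)) t := fun t _ => by
      simpa using ((hasDerivAt_id t).const_sub 1).fun_pow (j + 1)
    have hv : ∀ t ∈ Set.uIcc (0 : ℝ) 1,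
        HasDerivAt (fun t : ℝ => t ^ (i + 1) / (i + 1)) (t ^ i) t := fun t _ => by
      refine ((hasDerivAt_pow (i + 1) t).div_const ((i : ℝ) + 1)).congr_deriv ?_
      push_cast [Nat.add_sub_cancel]
      field_simp
    have hparts := intervalIntegral.integral_mul_deriv_eq_deriv_mul hu hv
      (by apply Continuous.intervalIntegrable; fun_prop)
      (by apply Continuous.intervalIntegrable; fun_prop)
    calc ∫ t in (0 : ℝ)..1, t ^ i * (1 - t) ^ (j + 1)
        = ((j + 1) / (i + 1)) * ∫ t in (0 : ℝ)..1, t ^ (i + 1) * (1 - t) ^ j := by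
          simp_rw [mul_comm (_ ^ i)]
          rw [hparts, ← intervalIntegral.integral_const_mul]
          simp only [sub_self, zero_pow (Nat.succ_ne_zero _), zero_mul, zero_div, mul_zero,
            zero_sub, ← intervalIntegral.integral_neg]
          congr 1; ext t; ring
      _ = (i ! * (j + 1)! : ℝ) / (i + (j + 1) + 1)! := by
          rw [ih, show i + 1 + j + 1 = i + (j + 1) + 1 by ring]
          push_cast [Nat.factorial_succ]
          field_simp

def cornerSimplex (d : ℕ) : Set (Fin d → ℝ) := {x | (∀ i, 0 ≤ x i) ∧ ∑ i, x i ≤ 1}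

theorem isClosed_cornerSimplex (d : ℕ) : IsClosed (cornerSimplex d) := by
  rw [cornerSimplex, Set.ofPred_and, Set.ofPred_forall]
  exact (isClosed_iInter fun i => isClosed_le continuous_const (continuous_apply i)).inter
    (isClosed_le (continuous_finsetSum _ fun i _ => continuous_apply i) continuous_const)

theorem measurableSet_cornerSimplex (d : ℕ) : MeasurableSet (cornerSimplex d) :=
  (isClosed_cornerSimplex d).measurableSet

theorem isCompact_cornerSimplex (d : ℕ) : IsCompact (cornerSimplex d) := by
  refine (isCompact_univ_pi fun _ => isCompact_Icc (a := (0 : ℝ)) (b := 1)).of_isClosed_subset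
    (isClosed_cornerSimplex d) fun x hx i _ => ⟨hx.1 i, ?_⟩
  exact (single_le_sum (fun j _ => hx.1 j) (mem_univ i)).trans hx.2

theorem convex_cornerSimplex (d : ℕ) : Convex ℝ (cornerSimplex d) := by
  rintro x ⟨hx₀, hx₁⟩ y ⟨hy₀, hy₁⟩ a b ha hb hab
  refine ⟨fun i => add_nonneg (mul_nonneg ha (hx₀ i)) (mul_nonneg hb (hy₀ i)), ?_⟩
  simp only [Pi.add_apply, Pi.smul_apply, smul_eq_mul, sum_add_distrib, ← mul_sum]
  nlinarith

theorem cornerSimplex_zero : cornerSimplex 0 = Set.univ := by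
  ext x; simp [cornerSimplex]

theorem mem_smul_cornerSimplex_iff {d : ℕ} {s : ℝ} (hs : 0 < s) (y : Fin d → ℝ) :
    y ∈ s • cornerSimplex d ↔ (∀ i, 0 ≤ y i) ∧ ∑ i, y i ≤ s := by
  rw [Set.mem_smul_set_iff_inv_smul_mem₀ hs.ne']
  simp only [cornerSimplex, Set.mem_ofPred_eq, Pi.smul_apply, smul_eq_mul, ← mul_sum]
  simp_rw [mul_nonneg_iff_of_pos_left (inv_pos.2 hs), inv_mul_le_iff₀ hs, mul_one]

theorem snoc_mem_cornerSimplex_iff {d : ℕ} (y : Fin d → ℝ) (t : ℝ) :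
    Fin.snoc y t ∈ cornerSimplex (d + 1) ↔ 0 ≤ t ∧ (∀ i, 0 ≤ y i) ∧ ∑ i, y i ≤ 1 - t := by
  simp only [cornerSimplex, Set.mem_ofPred_eq, Fin.forall_fin_succ', Fin.sum_univ_castSucc,
    Fin.snoc_castSucc, Fin.snoc_last]
  constructor
  · rintro ⟨⟨hy, ht⟩, hsum⟩; exact ⟨ht, hy, by linarith⟩
  · rintro ⟨ht, hy, hsum⟩; exact ⟨⟨hy, ht⟩, by linarith⟩

section Slicing

variable {G : Type*} [NormedAddCommGroup G] [NormedSpace ℝ G] {d : ℕ}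

theorem setIntegral_eq_integral_integral_snoc {s : Set (Fin (d + 1) → ℝ)} (hs : MeasurableSet s)
    {F : (Fin (d + 1) → ℝ) → G} (hF : IntegrableOn F s) :
    ∫ x in s, F x = ∫ t, ∫ y, s.indicator F (Fin.snoc y t) := by
  have he := (volume_preserving_piFinSuccAbove (fun _ : Fin (d + 1) => ℝ) (Fin.last d)).symm
  have he_apply : ∀ p : ℝ × (Fin d → ℝ),
      (MeasurableEquiv.piFinSuccAbove (fun _ => ℝ) (Fin.last d)).symm p = Fin.snoc p.2 p.1 :=
    fun p => Fin.insertNth_last' _ _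
  rw [← integral_indicator hs, ← he.integral_comp', Measure.volume_eq_prod, integral_prod]
  · simp only [he_apply]
  · rw [← Measure.volume_eq_prod]
    exact he.integrable_comp_emb (MeasurableEquiv.measurableEmbedding _) |>.2
      ((integrable_indicator_iff hs).2 hF)

theorem setIntegral_cornerSimplex_succ {F : (Fin (d + 1) → ℝ) → G}
    (hF : IntegrableOn F (cornerSimplex (d + 1))) :
    ∫ x in cornerSimplex (d + 1), F x
      = ∫ t in (0 : ℝ)..1, (1 - t) ^ d • ∫ z in cornerSimplex d, F (Fin.snoc ((1 - t) • z) t) := by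
  have hslice : ∀ t ∈ Set.Ioo (0 : ℝ) 1, ∫ y, (cornerSimplex (d + 1)).indicator F (Fin.snoc y t)
      = (1 - t) ^ d • ∫ z in cornerSimplex d, F (Fin.snoc ((1 - t) • z) t) := by
    rintro t ⟨ht₀, ht₁⟩
    have hpos : 0 < 1 - t := by linarith
    have hmem : ∀ y, Fin.snoc y t ∈ cornerSimplex (d + 1) ↔ y ∈ (1 - t) • cornerSimplex d :=
      fun y => by rw [snoc_mem_cornerSimplex_iff, mem_smul_cornerSimplex_iff hpos]; simp [ht₀.le]
    have hind : ∀ y, (cornerSimplex (d + 1)).indicator F (Fin.snoc y t)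
        = ((1 - t) • cornerSimplex d).indicator (fun y => F (Fin.snoc y t)) y :=
      fun y => by classical simp only [Set.indicator_apply, hmem]
    simp_rw [hind]
    rw [integral_indicator ((measurableSet_cornerSimplex d).const_smul₀ _),
      Measure.setIntegral_comp_smul_of_pos _ (fun y => F (Fin.snoc y t)) _ hpos,
      Module.finrank_fin_fun, smul_inv_smul₀ (pow_pos hpos d).ne']
  have houtside : ∀ t ∉ Set.Icc (0 : ℝ) 1,
      ∫ y, (cornerSimplex (d + 1)).indicator F (Fin.snoc y t) = 0 := fun t ht => by
    refine integral_eq_zero_of_ae (.of_forall fun y => Set.indicator_of_notMem ?_ _)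
    rw [snoc_mem_cornerSimplex_iff]
    rintro ⟨ht₀, hy, hsum⟩
    exact ht ⟨ht₀, by linarith [sum_nonneg fun i (_ : i ∈ univ) => hy i]⟩
  have hnull : ∀ᵐ t : ℝ, t ∉ ({0, 1} : Set ℝ) :=
    measure_eq_zero_iff_ae_notMem.1 ((Set.toFinite _).measure_zero _)
  rw [setIntegral_eq_integral_integral_snoc (measurableSet_cornerSimplex _) hF,
    intervalIntegral.integral_of_le zero_le_one, integral_Ioc_eq_integral_Ioo,
    ← integral_indicator measurableSet_Ioo]
  refine integral_congr_ae (hnull.mono fun t ht => ?_)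
  by_cases hmem : t ∈ Set.Ioo (0 : ℝ) 1
  · rw [Set.indicator_of_mem hmem]
    exact hslice t hmem
  · rw [Set.indicator_of_notMem hmem]
    refine houtside t fun h => hmem ?_
    simp only [Set.mem_insert_iff, Set.mem_singleton_iff, not_or] at ht
    exact ⟨lt_of_le_of_ne h.1 (Ne.symm ht.1), lt_of_le_of_ne h.2 ht.2⟩

end Slicing

/-- Evaluation of the complete homogeneous symmetric polynomial `h_k`. -/
def completeHomogeneous : ℕ → {n : ℕ} → (Fin n → ℝ) → ℝ
  | k, 0, _ => if k = 0 then 1 else 0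
  | k, n + 1, w =>
    ∑ p ∈ antidiagonal k, w (Fin.last n) ^ p.1 * completeHomogeneous p.2 (Fin.init w)

theorem completeHomogeneous_succ (k : ℕ) {n : ℕ} (w : Fin (n + 1) → ℝ) :
    completeHomogeneous k w
      = ∑ p ∈ antidiagonal k, w (Fin.last n) ^ p.1 * completeHomogeneous p.2 (Fin.init w) :=
  rfl

theorem completeHomogeneous_fin_one (k : ℕ) (w : Fin 1 → ℝ) :
    completeHomogeneous k w = w 0 ^ k := by
  rw [completeHomogeneous_succ, sum_eq_single (k, 0)]
  · simp [completeHomogeneous]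
  · rintro ⟨i, j⟩ hij hne
    have hj : j ≠ 0 := by rintro rfl; simp_all
    simp [completeHomogeneous, hj]
  · simp

theorem completeHomogeneous_zero {n : ℕ} (w : Fin n → ℝ) : completeHomogeneous 0 w = 1 := by
  induction n with
  | zero => rfl
  | succ n ih => simp [completeHomogeneous_succ, ih]

theorem completeHomogeneous_one {n : ℕ} (w : Fin n → ℝ) :
    completeHomogeneous 1 w = ∑ i, w i := by
  induction n with
  | zero => rfl
  | succ n ih =>
    simp only [completeHomogeneous_succ, Nat.sum_antidiagonal_succ, Nat.antidiagonal_zero,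
      sum_singleton, Nat.reduceAdd, pow_zero, pow_one, one_mul, mul_one, completeHomogeneous_zero,
      ih, Fin.sum_univ_castSucc, Fin.init]

theorem completeHomogeneous_two {n : ℕ} (w : Fin n → ℝ) :
    completeHomogeneous 2 w = ((∑ i, w i) ^ 2 + ∑ i, w i ^ 2) / 2 := by
  induction n with
  | zero => simp [completeHomogeneous]
  | succ n ih =>
    simp only [completeHomogeneous_succ, Nat.sum_antidiagonal_succ, Nat.antidiagonal_zero,
      sum_singleton, Nat.reduceAdd, pow_zero, pow_one, one_mul, mul_one, completeHomogeneous_zero,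
      completeHomogeneous_one, ih, Fin.sum_univ_castSucc, Fin.init]
    ring

theorem completeHomogeneous_three {n : ℕ} (w : Fin n → ℝ) :
    completeHomogeneous 3 w
      = ((∑ i, w i) ^ 3 + 3 * (∑ i, w i) * ∑ i, w i ^ 2 + 2 * ∑ i, w i ^ 3) / 6 := by
  induction n with
  | zero => simp [completeHomogeneous]
  | succ n ih =>
    simp only [completeHomogeneous_succ, Nat.sum_antidiagonal_succ, Nat.antidiagonal_zero,
      sum_singleton, Nat.reduceAdd, pow_zero, pow_one, one_mul, mul_one, completeHomogeneous_zero,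
      completeHomogeneous_one, completeHomogeneous_two, ih, Fin.sum_univ_castSucc, Fin.init]
    ring

theorem completeHomogeneous_four {n : ℕ} (w : Fin n → ℝ) :
    completeHomogeneous 4 w
      = ((∑ i, w i) ^ 4 + 6 * (∑ i, w i) ^ 2 * (∑ i, w i ^ 2) + 3 * (∑ i, w i ^ 2) ^ 2
          + 8 * (∑ i, w i) * (∑ i, w i ^ 3) + 6 * ∑ i, w i ^ 4) / 24 := by
  induction n with
  | zero => simp [completeHomogeneous]
  | succ n ih =>
    simp only [completeHomogeneous_succ, Nat.sum_antidiagonal_succ, Nat.antidiagonal_zero,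
      sum_singleton, Nat.reduceAdd, pow_zero, pow_one, one_mul, mul_one, completeHomogeneous_zero,
      completeHomogeneous_one, completeHomogeneous_two, completeHomogeneous_three, ih,
      Fin.sum_univ_castSucc, Fin.init]
    ring

/-- The affine function on `ℝ^d` with value `w 0` at the origin and `w i.succ` at the `i`-th
basis vector. -/
def cornerInterp {d : ℕ} (w : Fin (d + 1) → ℝ) (x : Fin d → ℝ) : ℝ :=
  w 0 * (1 - ∑ i, x i) + ∑ i, w i.succ * x i

theorem continuous_cornerInterp {d : ℕ} (w : Fin (d + 1) → ℝ) : Continuous (cornerInterp w) := by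
  unfold cornerInterp; fun_prop

theorem integrableOn_cornerInterp_pow {d : ℕ} (w : Fin (d + 1) → ℝ) (k : ℕ) :
    IntegrableOn (fun x => cornerInterp w x ^ k) (cornerSimplex d) :=
  ((continuous_cornerInterp w).pow k).continuousOn.integrableOn_compact (isCompact_cornerSimplex d)

theorem cornerInterp_snoc {d : ℕ} (w : Fin (d + 2) → ℝ) (z : Fin d → ℝ) (t : ℝ) :
    cornerInterp w (Fin.snoc ((1 - t) • z) t)
      = t * w (Fin.last _) + (1 - t) * cornerInterp (Fin.init w) z := by
  simp only [cornerInterp, Fin.sum_univ_castSucc, Fin.snoc_castSucc, Fin.snoc_last, Fin.init,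
    Fin.succ_castSucc, Fin.succ_last, Fin.castSucc_zero, Pi.smul_apply, smul_eq_mul, ← mul_sum]
  simp only [mul_left_comm _ (1 - t), ← mul_sum]
  ring

theorem setIntegral_add_mul_pow {X : Type*} [MeasurableSpace X] {μ : Measure X} {s : Set X}
    {f : X → ℝ} (hf : ∀ j, IntegrableOn (fun x => f x ^ j) s μ) (a b : ℝ) (k : ℕ) :
    ∫ x in s, (a + b * f x) ^ k ∂μ
      = ∑ p ∈ antidiagonal k, k.choose p.1 * a ^ p.1 * b ^ p.2 * ∫ x in s, f x ^ p.2 ∂μ := by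
  have hbinom : ∀ x, (a + b * f x) ^ k
      = ∑ p ∈ antidiagonal k, k.choose p.1 * a ^ p.1 * b ^ p.2 * f x ^ p.2 := fun x => by
    rw [(Commute.all a (b * f x)).add_pow']
    exact sum_congr rfl fun p _ => by rw [nsmul_eq_mul, mul_pow]; ring
  simp_rw [hbinom]
  rw [integral_finsetSum _ fun p _ => (hf p.2).const_mul _]
  simp_rw [integral_const_mul]

theorem setIntegral_cornerInterp_pow (d k : ℕ) (w : Fin (d + 1) → ℝ) :
    ∫ x in cornerSimplex d, cornerInterp w x ^ k = k ! / (d + k)! * completeHomogeneous k w := by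
  induction d generalizing k with
  | zero =>
    simp [cornerSimplex_zero, cornerInterp, completeHomogeneous_fin_one, measureReal_def,
      volume_pi, Nat.factorial_ne_zero]
  | succ d ih =>
    calc ∫ x in cornerSimplex (d + 1), cornerInterp w x ^ k
        = ∫ t in (0 : ℝ)..1, (1 - t) ^ d
            * ∫ z in cornerSimplex d,
                (t * w (Fin.last _) + (1 - t) * cornerInterp (Fin.init w) z) ^ k := by
          rw [setIntegral_cornerSimplex_succ (integrableOn_cornerInterp_pow w k)]
          simp_rw [cornerInterp_snoc, smul_eq_mul]
      _ = ∫ t in (0 : ℝ)..1, ∑ p ∈ antidiagonal k,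
            (k.choose p.1 * w (Fin.last _) ^ p.1
              * (p.2 ! / (d + p.2)! * completeHomogeneous p.2 (Fin.init w)))
              * (t ^ p.1 * (1 - t) ^ (d + p.2)) := by
          simp_rw [setIntegral_add_mul_pow (integrableOn_cornerInterp_pow _), ih, mul_sum]
          congr 1; ext t
          refine sum_congr rfl fun p _ => ?_
          ring
      _ = ∑ p ∈ antidiagonal k,
            (k.choose p.1 * w (Fin.last _) ^ p.1
              * (p.2 ! / (d + p.2)! * completeHomogeneous p.2 (Fin.init w)))
              * (p.1 ! * (d + p.2)! / (d + 1 + k)!) := by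
          rw [intervalIntegral.integral_finsetSum]
          · refine sum_congr rfl fun p hp => ?_
            rw [intervalIntegral.integral_const_mul, integral_pow_mul_one_sub_pow,
              show p.1 + (d + p.2) + 1 = d + 1 + k by rw [← mem_antidiagonal.1 hp]; ring]
          · exact fun p _ => by apply Continuous.intervalIntegrable; fun_prop
      _ = k ! / (d + 1 + k)! * completeHomogeneous k w := by
          rw [completeHomogeneous_succ, mul_sum]
          refine sum_congr rfl fun p hp => ?_
          obtain ⟨i, j⟩ := p
          obtain rfl : i + j = k := mem_antidiagonal.1 hp
          have hchoose : ((i + j).choose i * i ! * j ! : ℝ) = (i + j)! := by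
            have := Nat.choose_mul_factorial_mul_factorial (Nat.le_add_right i j)
            rw [Nat.add_sub_cancel_left] at this
            exact_mod_cast this
          field_simp
          rw [← hchoose]
          ring

theorem volume_real_cornerSimplex (d : ℕ) : volume.real (cornerSimplex d) = 1 / d ! := by
  simpa [completeHomogeneous_zero] using setIntegral_cornerInterp_pow d 0 0

section Parametrization

variable {E : Type*} [AddCommGroup E] [Module ℝ E] {d : ℕ}

def simplexParam (v : Fin (d + 1) → E) : (Fin d → ℝ) →ᵃ[ℝ] E :=
  (Fintype.linearCombination ℝ fun i => v i.succ - v 0).toAffineMap + AffineMap.const ℝ _ (v 0)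

theorem simplexParam_apply (v : Fin (d + 1) → E) (x : Fin d → ℝ) :
    simplexParam v x = ∑ i, x i • (v i.succ - v 0) + v 0 := by
  simp [simplexParam, Fintype.linearCombination_apply]

theorem simplexParam_injective {v : Fin (d + 1) → E} (hv : AffineIndependent ℝ v) :
    Function.Injective (simplexParam v) := by
  have hli : LinearIndependent ℝ fun i : Fin d => v i.succ - v 0 :=
    ((affineIndependent_iff_linearIndependent_vsub ℝ v 0).1 hv).comp
      (fun i => ⟨i.succ, Fin.succ_ne_zero i⟩)
      fun i j h => Fin.succ_injective _ (congrArg Subtype.val h)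
  intro x y h
  rw [simplexParam_apply, simplexParam_apply, add_left_inj, ← Fintype.linearCombination_apply,
    ← Fintype.linearCombination_apply] at h
  exact linearIndependent_iff_injective_fintypeLinearCombination.1 hli h

theorem image_simplexParam_cornerSimplex (v : Fin (d + 1) → E) :
    simplexParam v '' cornerSimplex d = convexHull ℝ (Set.range v) := by
  refine subset_antisymm ?_ (convexHull_min ?_ ((convex_cornerSimplex d).affine_image _))
  · rintro _ ⟨x, ⟨hx₀, hx₁⟩, rfl⟩
    have hbary : simplexParam v x
        = ∑ j, (Fin.cons (1 - ∑ i, x i) x : Fin (d + 1) → ℝ) j • v j := by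
      simp only [simplexParam_apply, Fin.sum_univ_succ, Fin.cons_zero, Fin.cons_succ, smul_sub,
        sum_sub_distrib, ← sum_smul, sub_smul, one_smul]
      abel
    rw [hbary]
    refine (convex_convexHull ℝ _).sum_mem (fun j _ => ?_) ?_
      fun j _ => subset_convexHull ℝ _ ⟨j, rfl⟩
    · cases j using Fin.cases with
      | zero => simpa using hx₁
      | succ j => simpa using hx₀ j
    · simp [Fin.sum_univ_succ]
  · rintro _ ⟨j, rfl⟩
    cases j using Fin.cases with
    | zero => exact ⟨0, ⟨fun i => le_rfl, by simp⟩, by simp [simplexParam_apply]⟩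
    | succ j =>
      refine ⟨Pi.single j 1, ⟨fun i => ?_, by simp⟩, by simp [simplexParam_apply, Pi.single_apply]⟩
      rw [Pi.single_apply]
      positivity

theorem affineMap_simplexParam (v : Fin (d + 1) → E) (ℓ : E →ᵃ[ℝ] ℝ) (x : Fin d → ℝ) :
    ℓ (simplexParam v x) = cornerInterp (ℓ ∘ v) x := by
  have hlin : ∀ a b : E, ℓ.linear (a - b) = ℓ a - ℓ b := ℓ.linearMap_vsub
  rw [simplexParam_apply, ← vadd_eq_add, ℓ.map_vadd, map_sum]
  simp only [map_smul, smul_eq_mul, vadd_eq_add, hlin, cornerInterp, Function.comp_apply, mul_sub,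
    sum_sub_distrib, ← sum_mul, mul_comm (ℓ _) (x _)]
  ring

end Parametrization

theorem setIntegral_image_affineMap {E F : Type*} [NormedAddCommGroup E] [NormedSpace ℝ E]
    [FiniteDimensional ℝ E] [MeasurableSpace E] [BorelSpace E] [NormedAddCommGroup F]
    [NormedSpace ℝ F] (μ : Measure E) [μ.IsAddHaarMeasure] {f : E →ᵃ[ℝ] E}
    (hf : Function.Injective f) {s : Set E} (hs : MeasurableSet s) (g : E → F) :
    ∫ x in f '' s, g x ∂μ = |LinearMap.det f.linear| • ∫ x in s, g (f x) ∂μ := by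
  have hderiv : ∀ x ∈ s, HasFDerivWithinAt f (LinearMap.toContinuousLinearMap f.linear) s x :=
    fun x _ => by
      rw [f.decomp]
      exact ((LinearMap.toContinuousLinearMap f.linear).hasFDerivAt.add_const _).hasFDerivWithinAt
  rw [integral_image_eq_integral_abs_det_fderiv_smul μ hs hderiv hf.injOn, integral_smul]
  rfl

theorem exists_setIntegral_convexHull_eq {d : ℕ} {v : Fin (d + 1) → EuclideanSpace ℝ (Fin d)}
    (hv : AffineIndependent ℝ v) :
    ∃ c : ℝ, ∀ g : EuclideanSpace ℝ (Fin d) → ℝ,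
      ∫ x in convexHull ℝ (Set.range v), g x
        = c * ∫ y in cornerSimplex d, g (simplexParam v y) := by
  let ψ := (simplexParam v).comp (WithLp.linearEquiv 2 ℝ (Fin d → ℝ)).toLinearMap.toAffineMap
  have hψ_inj : Function.Injective ψ :=
    (simplexParam_injective hv).comp (WithLp.linearEquiv 2 ℝ (Fin d → ℝ)).injective
  have htoLp := (MeasurableEquiv.toLp 2 (Fin d → ℝ)).measurableEmbedding
  refine ⟨|LinearMap.det ψ.linear|, fun g => ?_⟩
  calc ∫ x in convexHull ℝ (Set.range v), g x
      = ∫ x in ψ '' (WithLp.toLp 2 '' cornerSimplex d), g x := by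
        rw [← image_simplexParam_cornerSimplex, Set.image_image]; rfl
    _ = |LinearMap.det ψ.linear| * ∫ x in WithLp.toLp 2 '' cornerSimplex d, g (ψ x) :=
        setIntegral_image_affineMap volume hψ_inj
          (htoLp.measurableSet_image.2 (measurableSet_cornerSimplex d)) g
    _ = |LinearMap.det ψ.linear| * ∫ y in cornerSimplex d, g (simplexParam v y) := by
        rw [(PiLp.volume_preserving_toLp (Fin d)).setIntegral_image_emb htoLp]
        rfl

theorem setIntegral_convexHull_pow {d : ℕ} {v : Fin (d + 1) → EuclideanSpace ℝ (Fin d)}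
    (hv : AffineIndependent ℝ v) (ℓ : EuclideanSpace ℝ (Fin d) →ᵃ[ℝ] ℝ) (k : ℕ) :
    ∫ x in convexHull ℝ (Set.range v), ℓ x ^ k
      = volume.real (convexHull ℝ (Set.range v)) * (k ! * d ! / (d + k)!)
          * completeHomogeneous k (ℓ ∘ v) := by
  obtain ⟨c, hc⟩ := exists_setIntegral_convexHull_eq hv
  have hvol : volume.real (convexHull ℝ (Set.range v)) = c * ((d ! : ℝ))⁻¹ := by
    simpa [volume_real_cornerSimplex] using hc fun _ => 1
  simp_rw [hc, hvol, affineMap_simplexParam, setIntegral_cornerInterp_pow]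
  field_simp

theorem integral_linear_fourth_over_simplex_general (n : ℕ)
    (v : Fin n → EuclideanSpace ℝ (Fin (n - 1))) (hv : AffineIndependent ℝ v)
    (ℓ : EuclideanSpace ℝ (Fin (n - 1)) →ₗ[ℝ] ℝ) (h0 : ∑ i, ℓ (v i) = 0) :
    (∫ x in convexHull ℝ (Set.range v), (ℓ x) ^ 4)
      = ((volume (convexHull ℝ (Set.range v))).toReal / (n * (n + 1) * (n + 2) * (n + 3)))
          * (6 * ∑ i, (ℓ (v i)) ^ 4 + 3 * (∑ i, (ℓ (v i)) ^ 2) ^ 2) := by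
  cases n with
  | zero => simp
  | succ d =>
    -- `EuclideanSpace ℝ (Fin (d + 1 - 1))` is definitionally `EuclideanSpace ℝ (Fin d)`.
    have hmoment := setIntegral_convexHull_pow (d := d) hv ℓ.toAffineMap 4
    simp only [LinearMap.coe_toAffineMap, completeHomogeneous_four, Function.comp_apply,
      h0] at hmoment
    refine hmoment.trans ?_
    rw [measureReal_def]
    push_cast [Nat.factorial_succ]
    field_simp
    ring

theorem integral_linear_fourth_over_simplex (n : ℕ) (hn : 1 ≤ n)
    (v : Fin n → EuclideanSpace ℝ (Fin (n - 1))) (hv : AffineIndependent ℝ v)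
    (ℓ : EuclideanSpace ℝ (Fin (n - 1)) →ₗ[ℝ] ℝ) (h0 : ∑ i, ℓ (v i) = 0) :
    (∫ x in convexHull ℝ (Set.range v), (ℓ x) ^ 4)
      = ((volume (convexHull ℝ (Set.range v))).toReal / (n * (n + 1) * (n + 2) * (n + 3)))
          * (6 * ∑ i, (ℓ (v i)) ^ 4 + 3 * (∑ i, (ℓ (v i)) ^ 2) ^ 2) :=
  integral_linear_fourth_over_simplex_general n v hv ℓ h0
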